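/- Let 1/(8r²) ≤ α ≤ 1/(4r²) and suppose Z is a stationary (KKT) point. Fix i ∈ {1,…,N} with T₁(i) and T₂(i) nonempty, let k ≠ y(i), and assume |D(k)| = |D(y(i))| = |T₁(i)| + |T₂(i)|. Let d_T ∈ [0, r²] and δ_T ∈ [0, r²], and set q_T' = P_{(j,l)∈T₂(i)×T₁(i)}[z_jᵀz_l ≤ d_T] and σ = P_{(j,l)∈T₂(i)×T₂(i)}[z_jᵀz_l ≤ δ_T]. Then |D(k)| · (E_{(j,l)∈T₂(i)×D(k)}[z_jᵀz_l])² ≤ N r⁴/d + 30·|T₂(i)|·r⁴ − |D(k)|·d_T² + |T₁(i)|·q_T'·d_T² + |T₂(i)|·σ·δ_T². -/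

import Mathlib

open Finset
open scoped BigOperators RealInnerProductSpace

/-- The set of indices whose label is `k`. -/
def classSet {N K : ℕ} (y : Fin N → Fin K) (k : Fin K) : Finset (Fin N) :=
  Finset.univ.filter (fun j => y j = k)

/-- `T₂(i)`: the indices `j` with `ŵ i j = 1`. -/
def T2 {N : ℕ} (w : Fin N → Fin N → Bool) (i : Fin N) : Finset (Fin N) :=
  Finset.univ.filter (fun j => w i j = true)

/-- `T₁(i)`: the indices `j` in the class of `i` with `ŵ i j = 0`. -/
def T1 {N K : ℕ} (y : Fin N → Fin K) (w : Fin N → Fin N → Bool) (i : Fin N) :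
    Finset (Fin N) :=
  Finset.univ.filter (fun j => y j = y i ∧ w i j = false)

/-- `ŵ` as a real-valued (0/1) matrix entry. -/
def wR {N : ℕ} (w : Fin N → Fin N → Bool) (i j : Fin N) : ℝ := if w i j then 1 else 0

/-- The `d × N` matrix whose columns are the representations `z i`. -/
def Zmat {N d : ℕ} (z : Fin N → EuclideanSpace ℝ (Fin d)) : Matrix (Fin d) (Fin N) ℝ :=
  Matrix.of fun a i => z i a

/-- The graph Laplacian of the adjacency `a i j = ŵ i j + μ i j`. -/
noncomputable def Lmat {N : ℕ} (w : Fin N → Fin N → Bool) (μ : Fin N → Fin N → ℝ) :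
    Matrix (Fin N) (Fin N) ℝ :=
  Matrix.of fun i j =>
    if i = j then ∑ k ∈ Finset.univ.erase i, (wR w i k + μ i k) else -(wR w i j + μ i j)

/-- The feature correlation matrix `C = (1/N) ∑ i, z i (z i)ᵀ`. -/
noncomputable def Cmat {N d : ℕ} (z : Fin N → EuclideanSpace ℝ (Fin d)) :
    Matrix (Fin d) (Fin d) ℝ :=
  ((N : ℝ))⁻¹ • ∑ i, Matrix.of (fun a b => z i a * z i b)

/-- Stationarity (KKT) equation `Z L + 2 α N (C − (r²/d) I_d) Z = 0`
for the multipliers `μ`. -/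
def IsKKT {N d : ℕ} (z : Fin N → EuclideanSpace ℝ (Fin d)) (w : Fin N → Fin N → Bool)
    (μ : Fin N → Fin N → ℝ) (α r : ℝ) : Prop :=
  Zmat z * Lmat w μ + (2 * α * (N : ℝ)) •
    ((Cmat z - (r ^ 2 / (d : ℝ)) • (1 : Matrix (Fin d) (Fin d) ℝ)) * Zmat z) = 0

/-- Uniform average of `f` over `S × T`. -/
noncomputable def avg2 {N : ℕ} (S T : Finset (Fin N)) (f : Fin N → Fin N → ℝ) : ℝ :=
  (∑ j ∈ S, ∑ l ∈ T, f j l) / ((S.card : ℝ) * (T.card : ℝ))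

open scoped Classical in
/-- The fraction of pairs of `S × T` satisfying `p`. -/
noncomputable def frac2 {N : ℕ} (S T : Finset (Fin N)) (p : Fin N → Fin N → Prop) : ℝ :=
  (((S ×ˢ T).filter (fun q => p q.1 q.2)).card : ℝ) / ((S.card : ℝ) * (T.card : ℝ))

/-! Testing the stationarity equation at column `j` against `z j`, the Laplacian part becomes
`∑ₘ a_{jm} (r² - ⟪z j, z m⟫) ≥ 0`, so the correlation part forces `∑ₘ ⟪z j, z m⟫² ≤ N r⁴ / d`
for every `j`. For `j ∈ T₂(i)` this sum contains the disjoint blocks over `D(k)`, `T₁(i)` and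
`T₂(i)`; the last two are at least `dT²` (resp. `δT²`) times the number of pairs whose inner
product exceeds the threshold, and Cauchy–Schwarz bounds `|D(k)|` times the squared mean over
`T₂(i) × D(k)` by the `D(k)`-block divided by `|T₂(i)|`. Since `|D(k)| = |T₁(i)| + |T₂(i)|`, the
remaining `|T₂(i)| dT²` is absorbed by `30 |T₂(i)| r⁴`. -/

open scoped Matrix

section Stationarity

variable {N d : ℕ} (z : Fin N → EuclideanSpace ℝ (Fin d))

theorem Zmat_transpose_mul_Zmat : (Zmat z)ᵀ * Zmat z = Matrix.gram ℝ z := by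
  ext i j
  simp [Matrix.mul_apply, Zmat, Matrix.gram_apply, PiLp.inner_apply, mul_comm]

theorem Cmat_eq_smul_Zmat_mul_transpose : Cmat z = (N : ℝ)⁻¹ • (Zmat z * (Zmat z)ᵀ) := by
  ext a b
  simp [Cmat, Matrix.mul_apply, Zmat, Matrix.sum_apply]

theorem gram_mul_Lmat_apply_self {w : Fin N → Fin N → Bool} {μ : Fin N → Fin N → ℝ}
    (hsym : ∀ i j, w i j = w j i) (hμsym : ∀ i j, μ i j = μ j i) (j : Fin N) :
    (Matrix.gram ℝ z * Lmat w μ) j j =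
      ∑ m ∈ univ.erase j, (wR w j m + μ j m) * (⟪z j, z j⟫ - ⟪z j, z m⟫) := by
  rw [Matrix.mul_apply, ← add_sum_erase _ _ (mem_univ j), Matrix.gram_apply]
  simp only [Lmat, Matrix.of_apply, if_true, mul_sum, ← sum_add_distrib]
  refine sum_congr rfl fun m hm => ?_
  rw [if_neg (ne_of_mem_erase hm), Matrix.gram_apply, wR, wR, hsym m j, hμsym m j]
  ring

variable {z}

theorem gram_mul_Lmat_apply_self_nonneg {r : ℝ} (hz : ∀ i, ‖z i‖ = r)
    {w : Fin N → Fin N → Bool} {μ : Fin N → Fin N → ℝ}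
    (hsym : ∀ i j, w i j = w j i) (hμsym : ∀ i j, μ i j = μ j i)
    (hμpos : ∀ i j, i ≠ j → 0 ≤ μ i j) (j : Fin N) :
    0 ≤ (Matrix.gram ℝ z * Lmat w μ) j j := by
  rw [gram_mul_Lmat_apply_self z hsym hμsym]
  refine sum_nonneg fun m hm => mul_nonneg ?_ ?_
  · have : (0 : ℝ) ≤ wR w j m := by unfold wR; split <;> norm_num
    linarith [hμpos j m (ne_of_mem_erase hm).symm]
  · rw [real_inner_self_eq_norm_sq, hz]
    have := real_inner_le_norm (z j) (z m)
    rw [hz, hz] at this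
    linarith

theorem IsKKT.gram_mul_Lmat_add_eq_zero {w : Fin N → Fin N → Bool} {μ : Fin N → Fin N → ℝ}
    {α r : ℝ} (hkkt : IsKKT z w μ α r) :
    Matrix.gram ℝ z * Lmat w μ + (2 * α * N) •
      ((N : ℝ)⁻¹ • (Matrix.gram ℝ z * Matrix.gram ℝ z) - (r ^ 2 / d) • Matrix.gram ℝ z) = 0 := by
  have h := congrArg ((Zmat z)ᵀ * ·) hkkt
  simp only [Cmat_eq_smul_Zmat_mul_transpose, Matrix.mul_add, Matrix.mul_smul,
    Matrix.sub_mul, Matrix.mul_sub, Matrix.smul_mul, Matrix.one_mul, Matrix.mul_zero] at h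
  simp only [← Matrix.mul_assoc, Zmat_transpose_mul_Zmat] at h
  rwa [Matrix.mul_assoc, Zmat_transpose_mul_Zmat] at h

theorem IsKKT.gram_mul_Lmat_apply_self {w : Fin N → Fin N → Bool} {μ : Fin N → Fin N → ℝ}
    {α r : ℝ} (hkkt : IsKKT z w μ α r) (j : Fin N) :
    (Matrix.gram ℝ z * Lmat w μ) j j +
      2 * α * (∑ m, ⟪z j, z m⟫ ^ 2 - N * (r ^ 2 / d) * ⟪z j, z j⟫) = 0 := by
  have hN : (N : ℝ) ≠ 0 := Nat.cast_ne_zero.mpr (Fin.pos j).ne'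
  have h := congrFun (congrFun hkkt.gram_mul_Lmat_add_eq_zero j) j
  simp only [Matrix.add_apply, Matrix.smul_apply, Matrix.sub_apply, Matrix.mul_apply,
    Matrix.gram_apply, Matrix.zero_apply, smul_eq_mul] at h
  rw [← h]
  simp only [Matrix.mul_apply, Matrix.gram_apply, real_inner_comm (z j), sq]
  field_simp

theorem IsKKT.sum_inner_sq_le {r : ℝ} (hz : ∀ i, ‖z i‖ = r)
    {w : Fin N → Fin N → Bool} {μ : Fin N → Fin N → ℝ}
    (hsym : ∀ i j, w i j = w j i) (hμsym : ∀ i j, μ i j = μ j i)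
    (hμpos : ∀ i j, i ≠ j → 0 ≤ μ i j) {α : ℝ} (hα : 0 < α) (hkkt : IsKKT z w μ α r)
    (j : Fin N) : ∑ m, ⟪z j, z m⟫ ^ 2 ≤ N * r ^ 4 / d := by
  have h := hkkt.gram_mul_Lmat_apply_self j
  have hL := gram_mul_Lmat_apply_self_nonneg hz hsym hμsym hμpos j
  rw [real_inner_self_eq_norm_sq, hz] at h
  have : ∑ m, ⟪z j, z m⟫ ^ 2 - N * (r ^ 2 / d) * r ^ 2 ≤ 0 :=
    nonpos_of_mul_nonpos_right (by linarith) (by positivity : (0 : ℝ) < 2 * α)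
  linarith [show (N : ℝ) * (r ^ 2 / d) * r ^ 2 = N * r ^ 4 / d by ring]

end Stationarity

section Classes

variable {N K : ℕ} {y : Fin N → Fin K} {w : Fin N → Fin N → Bool} {i : Fin N} {k : Fin K}

theorem disjoint_classSet_T1 (hk : k ≠ y i) : Disjoint (classSet y k) (T1 y w i) := by
  simp only [classSet, T1, disjoint_filter]
  rintro l - rfl ⟨hl, -⟩
  exact hk hl

theorem disjoint_classSet_T2 (hcls : ∀ i j, w i j = true → y i = y j) (hk : k ≠ y i) :
    Disjoint (classSet y k) (T2 w i) := by
  simp only [classSet, T2, disjoint_filter]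
  rintro l - rfl hl
  exact hk (hcls i l hl).symm

theorem disjoint_T1_T2 : Disjoint (T1 y w i) (T2 w i) := by
  simp only [T1, T2, disjoint_filter]
  rintro l - ⟨-, hl⟩
  simp [hl]

theorem sum_classSet_add_sum_T1_add_sum_T2_le (hcls : ∀ i j, w i j = true → y i = y j)
    (hk : k ≠ y i) {f : Fin N → ℝ} (hf : ∀ l, 0 ≤ f l) :
    ∑ l ∈ classSet y k, f l + ∑ l ∈ T1 y w i, f l + ∑ l ∈ T2 w i, f l ≤ ∑ l, f l := by
  have hdisj : Disjoint (classSet y k ∪ T1 y w i) (T2 w i) :=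
    disjoint_union_left.mpr ⟨disjoint_classSet_T2 hcls hk, disjoint_T1_T2⟩
  rw [← sum_union (disjoint_classSet_T1 hk), ← sum_union hdisj]
  exact sum_le_univ_sum_of_nonneg hf

end Classes

section PairAverages

variable {N : ℕ} (S T : Finset (Fin N))

-- `frac2` filters with the classical decidability instance; the statements below must match it.
open scoped Classical in
theorem frac2_mul_card_mul_card (p : Fin N → Fin N → Prop) :
    frac2 S T p * (S.card * T.card) = ((S ×ˢ T).filter (fun q => p q.1 q.2)).card := by
  rcases eq_or_ne ((S.card : ℝ) * T.card) 0 with h | h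
  · have : S ×ˢ T = ∅ := by
      rw [← card_eq_zero, card_product]
      exact_mod_cast h
    simp [h, this]
  · exact div_mul_cancel₀ _ h

open scoped Classical in
theorem one_sub_frac2_mul_card_mul_card (p : Fin N → Fin N → Prop) :
    (1 - frac2 S T p) * (S.card * T.card) = ((S ×ˢ T).filter (fun q => ¬ p q.1 q.2)).card := by
  have h := card_filter_add_card_filter_not (s := S ×ˢ T) (fun q => p q.1 q.2)
  rw [card_product] at h
  rw [sub_mul, one_mul, frac2_mul_card_mul_card, sub_eq_iff_eq_add']
  exact_mod_cast h.symm

open scoped Classical in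
theorem one_sub_frac2_mul_sq_le_sum_sq (f : Fin N → Fin N → ℝ) {t : ℝ} (ht : 0 ≤ t) :
    (1 - frac2 S T (fun j l => f j l ≤ t)) * (S.card * T.card) * t ^ 2 ≤
      ∑ j ∈ S, ∑ l ∈ T, f j l ^ 2 := by
  set B := (S ×ˢ T).filter (fun q => ¬ f q.1 q.2 ≤ t)
  have hB : (B.card : ℝ) * t ^ 2 ≤ ∑ q ∈ B, f q.1 q.2 ^ 2 := by
    rw [← nsmul_eq_mul]
    refine card_nsmul_le_sum _ _ _ fun q hq => ?_
    exact pow_le_pow_left₀ ht (not_le.mp (mem_filter.mp hq).2).le 2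
  have hsub : ∑ q ∈ B, f q.1 q.2 ^ 2 ≤ ∑ j ∈ S, ∑ l ∈ T, f j l ^ 2 := by
    rw [← sum_product' S T (fun j l => f j l ^ 2)]
    exact sum_le_sum_of_subset_of_nonneg (filter_subset _ _) fun _ _ _ => sq_nonneg _
  rw [one_sub_frac2_mul_card_mul_card]
  exact hB.trans hsub

theorem card_mul_avg2_sq_le (f : Fin N → Fin N → ℝ) :
    (T.card : ℝ) * avg2 S T f ^ 2 ≤ (∑ j ∈ S, ∑ l ∈ T, f j l ^ 2) / S.card := by
  have hcs := sq_sum_le_card_mul_sum_sq (s := S ×ˢ T) (f := fun q => f q.1 q.2)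
  rw [card_product, sum_product, sum_product] at hcs
  push_cast at hcs
  rcases eq_or_ne (S.card : ℝ) 0 with hS | hS
  · simp [avg2, hS]
  rcases eq_or_ne (T.card : ℝ) 0 with hT | hT
  · simp only [hT, zero_mul]
    positivity
  rw [avg2, le_div_iff₀ (by positivity), div_pow]
  calc (T.card : ℝ) * ((∑ j ∈ S, ∑ l ∈ T, f j l) ^ 2 / (S.card * T.card) ^ 2) * S.card
      = (∑ j ∈ S, ∑ l ∈ T, f j l) ^ 2 / (S.card * T.card) := by field_simp
    _ ≤ ∑ j ∈ S, ∑ l ∈ T, f j l ^ 2 := by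
      rw [div_le_iff₀ (by positivity)]
      linarith

end PairAverages

theorem stmt_9_general
    (N d K : ℕ)
    (r : ℝ) (hr : 0 < r)
    (z : Fin N → EuclideanSpace ℝ (Fin d)) (hz : ∀ i, ‖z i‖ = r)
    (y : Fin N → Fin K)
    (w : Fin N → Fin N → Bool)
    (hsym : ∀ i j, w i j = w j i)
    (hcls : ∀ i j, w i j = true → y i = y j)
    (α : ℝ) (hα₁ : 1 / (8 * r ^ 2) ≤ α)
    (hstat : ∃ μ : Fin N → Fin N → ℝ,
      (∀ i j, μ i j = μ j i) ∧ (∀ i, μ i i = 0) ∧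
      (∀ i j, i ≠ j → 0 ≤ μ i j) ∧ IsKKT z w μ α r)
    (i : Fin N) (hT2 : (T2 w i).Nonempty)
    (k : Fin K) (hk : k ≠ y i)
    (hcard₁ : (classSet y k).card = (classSet y (y i)).card)
    (hcard₂ : (classSet y (y i)).card = (T1 y w i).card + (T2 w i).card)
    (dT δT : ℝ) (hdT : dT ∈ Set.Icc (0 : ℝ) (r ^ 2)) (hδT : δT ∈ Set.Icc (0 : ℝ) (r ^ 2))
    (qT' σ : ℝ)
    (hqT' : qT' = frac2 (T2 w i) (T1 y w i) (fun j l => ⟪z j, z l⟫ ≤ dT))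
    (hσ : σ = frac2 (T2 w i) (T2 w i) (fun j l => ⟪z j, z l⟫ ≤ δT)) :
    ((classSet y k).card : ℝ) *
        (avg2 (T2 w i) (classSet y k) (fun j l => ⟪z j, z l⟫)) ^ 2 ≤
      (N : ℝ) * r ^ 4 / (d : ℝ) + 30 * ((T2 w i).card : ℝ) * r ^ 4 -
        ((classSet y k).card : ℝ) * dT ^ 2 +
        ((T1 y w i).card : ℝ) * qT' * dT ^ 2 +
        ((T2 w i).card : ℝ) * σ * δT ^ 2 := by
  obtain ⟨μ, hμsym, -, hμpos, hkkt⟩ := hstat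
  have hα : 0 < α := lt_of_lt_of_le (by positivity) hα₁
  have ha : (0 : ℝ) < (T2 w i).card := Nat.cast_pos.mpr hT2.card_pos
  have hc : ((classSet y k).card : ℝ) = (T1 y w i).card + (T2 w i).card := by
    exact_mod_cast hcard₁.trans hcard₂
  have hrows : ∑ j ∈ T2 w i, (∑ l ∈ classSet y k, ⟪z j, z l⟫ ^ 2 +
      ∑ l ∈ T1 y w i, ⟪z j, z l⟫ ^ 2 + ∑ l ∈ T2 w i, ⟪z j, z l⟫ ^ 2) ≤
      (T2 w i).card * ((N : ℝ) * r ^ 4 / d) := by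
    rw [← nsmul_eq_mul]
    refine sum_le_card_nsmul _ _ _ fun j _ => ?_
    exact (sum_classSet_add_sum_T1_add_sum_T2_le hcls hk fun l => sq_nonneg _).trans
      (hkkt.sum_inner_sq_le hz hsym hμsym hμpos hα j)
  rw [sum_add_distrib, sum_add_distrib] at hrows
  have hP1 := one_sub_frac2_mul_sq_le_sum_sq (T2 w i) (T1 y w i) (fun j l => ⟪z j, z l⟫) hdT.1
  have hP2 := one_sub_frac2_mul_sq_le_sum_sq (T2 w i) (T2 w i) (fun j l => ⟪z j, z l⟫) hδT.1
  rw [← hqT'] at hP1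
  rw [← hσ] at hP2
  have hdT_sq : dT ^ 2 ≤ 30 * r ^ 4 := by nlinarith [hdT.1, hdT.2]
  refine (card_mul_avg2_sq_le _ _ _).trans ?_
  rw [div_le_iff₀ ha, hc]
  linarith [mul_le_mul_of_nonneg_left hdT_sq (sq_nonneg ((T2 w i).card : ℝ)),
    mul_nonneg (sq_nonneg ((T2 w i).card : ℝ)) (sq_nonneg δT)]

theorem stmt_9
    (N d K : ℕ) (hN : 1 ≤ N) (hd : 1 ≤ d) (hK : 1 ≤ K)
    (r : ℝ) (hr : 0 < r)
    (z : Fin N → EuclideanSpace ℝ (Fin d)) (hz : ∀ i, ‖z i‖ = r)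
    (y : Fin N → Fin K)
    (hD : ∀ k, (classSet y k).Nonempty)
    (w : Fin N → Fin N → Bool)
    (hsym : ∀ i j, w i j = w j i)
    (hdiag : ∀ i, w i i = true)
    (hcls : ∀ i j, w i j = true → y i = y j)
    (htrans : ∀ i j k, w i j = true → w j k = true → w i k = true)
    (α : ℝ) (hα₁ : 1 / (8 * r ^ 2) ≤ α) (hα₂ : α ≤ 1 / (4 * r ^ 2))
    (hstat : ∃ μ : Fin N → Fin N → ℝ,
      (∀ i j, μ i j = μ j i) ∧ (∀ i, μ i i = 0) ∧
      (∀ i j, i ≠ j → 0 ≤ μ i j) ∧ IsKKT z w μ α r)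
    (i : Fin N) (hT1 : (T1 y w i).Nonempty) (hT2 : (T2 w i).Nonempty)
    (k : Fin K) (hk : k ≠ y i)
    (hcard₁ : (classSet y k).card = (classSet y (y i)).card)
    (hcard₂ : (classSet y (y i)).card = (T1 y w i).card + (T2 w i).card)
    (dT δT : ℝ) (hdT : dT ∈ Set.Icc (0 : ℝ) (r ^ 2)) (hδT : δT ∈ Set.Icc (0 : ℝ) (r ^ 2))
    (qT' σ : ℝ)
    (hqT' : qT' = frac2 (T2 w i) (T1 y w i) (fun j l => ⟪z j, z l⟫ ≤ dT))
    (hσ : σ = frac2 (T2 w i) (T2 w i) (fun j l => ⟪z j, z l⟫ ≤ δT)) :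
    ((classSet y k).card : ℝ) *
        (avg2 (T2 w i) (classSet y k) (fun j l => ⟪z j, z l⟫)) ^ 2 ≤
      (N : ℝ) * r ^ 4 / (d : ℝ) + 30 * ((T2 w i).card : ℝ) * r ^ 4 -
        ((classSet y k).card : ℝ) * dT ^ 2 +
        ((T1 y w i).card : ℝ) * qT' * dT ^ 2 +
        ((T2 w i).card : ℝ) * σ * δT ^ 2 :=
  stmt_9_general N d K r hr z hz y w hsym hcls α hα₁ hstat i hT2 k hk hcard₁ hcard₂ dT δT hdT hδT
    qT' σ hqT' hσ
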